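/- arXiv:1605.03276 — 4 statements merged into one kernel-verified Lean document; each statement's English description precedes it below -/
import Mathlib

section
/- Let J_x denote the truncation of a Jacobi operator on a one-ended levelled tree to the finite subtree Γ_x. Every eigenvalue r of the symmetric matrix J_x satisfies at least one of: (a) P_{x,x'}(r) = 0, or (b) there exist a vertex y ∈ Γ_x and distinct y₁, y₂ ∈ N_y with P_{y₁,y}(r) = P_{y₂,y}(r) = 0. Conversely every such r is an eigenvalue of J_x. -/
/-- A one-ended levelled tree: every vertex `x` has a unique upward neighbor
`parent x` (written `x'`) one level up, and a finite set `children x` of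
downward neighbors one level down; the tree is connected with one end. -/
structure JTree where
  V : Type
  parent : V → V
  level : V → ℕ
  level_parent : ∀ x, level (parent x) = level x + 1
  children : V → Finset V
  mem_children : ∀ x y : V, y ∈ children x ↔ parent y = x
  connected : ∀ x y : V, ∃ k l : ℕ, parent^[k] x = parent^[l] y
  subtree_finite : ∀ x : V, {t : V | ∃ k : ℕ, parent^[k] t = x}.Finite

namespace JTree

variable (T : JTree)

/-- `T.descend t x` means `t` belongs to the finite subtree `Γ_x` below (and
including) the vertex `x`. -/
def descend (t x : T.V) : Prop := ∃ k : ℕ, T.parent^[k] t = x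

/-- The Jacobi operator on the tree:
`(Jv)(x) = λ_x v(x') + β_x v(x) + Σ_{y ∈ N_x} λ_y v(y)`. -/
noncomputable def jacobi (lam beta : T.V → ℝ) (v : T.V → ℂ) (x : T.V) : ℂ :=
  (lam x : ℂ) * v (T.parent x) + (beta x : ℂ) * v x +
    ∑ y ∈ T.children x, (lam y : ℂ) * v y

end JTree

namespace StmtAux
variable {T : JTree}

lemma level_iterate (s : T.V) (k : ℕ) : T.level (T.parent^[k] s) = T.level s + k := by
  induction k with
  | zero => simp
  | succ n ih => rw [Function.iterate_succ_apply', T.level_parent, ih]; ring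

lemma descend_refl (t : T.V) : T.descend t t := ⟨0, rfl⟩

lemma descend_trans {s y t : T.V} (h1 : T.descend s y) (h2 : T.descend y t) : T.descend s t := by
  obtain ⟨k, hk⟩ := h1; obtain ⟨l, hl⟩ := h2
  exact ⟨l + k, by rw [Function.iterate_add_apply, hk, hl]⟩

lemma descend_level {s t : T.V} (h : T.descend s t) : T.level s ≤ T.level t := by
  obtain ⟨k, hk⟩ := h
  have := level_iterate s k
  rw [hk] at this; omega

lemma descend_eq_of_level {s t : T.V} (h : T.descend s t) (hl : T.level t ≤ T.level s) : s = t := by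
  obtain ⟨k, hk⟩ := h
  have h2 := level_iterate s k
  rw [hk] at h2
  have : k = 0 := by omega
  rw [this] at hk; exact hk

lemma descend_parent {s c : T.V} (h : T.descend (T.parent s) c) : T.descend s c := by
  obtain ⟨k, hk⟩ := h
  exact ⟨k + 1, by rw [Function.iterate_add_apply]; exact hk⟩

lemma child_parent {y t : T.V} (hy : y ∈ T.children t) : T.parent y = t := (T.mem_children t y).mp hy

lemma child_level {y t : T.V} (hy : y ∈ T.children t) : T.level t = T.level y + 1 := by
  rw [← child_parent hy, T.level_parent]

lemma child_descend {y t : T.V} (hy : y ∈ T.children t) : T.descend y t :=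
  ⟨1, by simpa using child_parent hy⟩

lemma not_descend_parent (t : T.V) : ¬ T.descend (T.parent t) t := by
  intro h
  have := descend_level h
  have := T.level_parent t
  omega

/-- unique routing: a proper descendant of `t` descends through a unique child -/
lemma exists_child_route {s t : T.V} (h : T.descend s t) (hne : s ≠ t) :
    ∃ y ∈ T.children t, T.descend s y := by
  obtain ⟨k, hk⟩ := h
  match k, hk with
  | 0, hk => exact absurd hk hne
  | (n+1), hk =>
    refine ⟨T.parent^[n] s, ?_, ⟨n, rfl⟩⟩
    rw [T.mem_children]
    rw [← Function.iterate_succ_apply' T.parent n s]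
    exact hk

lemma descend_parent_of_ne {s y : T.V} (h : T.descend s y) (hne : s ≠ y) :
    T.descend (T.parent s) y := by
  obtain ⟨k, hk⟩ := h
  match k, hk with
  | 0, hk => exact absurd hk hne
  | (n+1), hk =>
    exact ⟨n, by rw [← Function.iterate_succ_apply T.parent n s]; exact hk⟩

lemma child_route_unique {s t y₁ y₂ : T.V} (h1 : y₁ ∈ T.children t) (h2 : y₂ ∈ T.children t)
    (d1 : T.descend s y₁) (d2 : T.descend s y₂) : y₁ = y₂ := by
  obtain ⟨a, ha⟩ := d1; obtain ⟨b, hb⟩ := d2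
  have la := level_iterate s a; have lb := level_iterate s b
  rw [ha] at la; rw [hb] at lb
  have h1' := child_level h1; have h2' := child_level h2
  have : a = b := by omega
  rw [this] at ha; rw [ha] at hb; exact hb

lemma not_descend_of_child {y t : T.V} (hy : y ∈ T.children t) : ¬ T.descend t y := by
  intro h
  have := descend_level h
  have := child_level hy
  omega

lemma subtree_ssubset {y t : T.V} (hy : y ∈ T.children t) :
    {s | T.descend s y} ⊂ {s | T.descend s t} := by
  constructor
  · intro s hs
    exact descend_trans hs (child_descend hy)
  · intro hsub
    exact not_descend_of_child hy (hsub (descend_refl t))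

lemma subtree_card_lt {y t : T.V} (hy : y ∈ T.children t) :
    {s | T.descend s y}.ncard < {s | T.descend s t}.ncard :=
  Set.ncard_lt_ncard (subtree_ssubset hy) (T.subtree_finite t)


section Poly
variable {lam beta : T.V → ℝ} {P : T.V → T.V → Polynomial ℝ}

lemma Pnn_ne (hlead : ∀ x : T.V, 0 < (P x x).leadingCoeff ∧ 0 < (P x (T.parent x)).leadingCoeff)
    (t : T.V) : P t t ≠ 0 := by
  intro h0
  have := (hlead t).1
  rw [h0] at this; simp at this

lemma Pq_ne (hlead : ∀ x : T.V, 0 < (P x x).leadingCoeff ∧ 0 < (P x (T.parent x)).leadingCoeff)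
    (t : T.V) : P t (T.parent t) ≠ 0 := by
  intro h0
  have := (hlead t).2
  rw [h0] at this; simp at this

lemma Pq_dvd (hlcm : ∀ x : T.V, P x x = (T.children x).lcm fun y => P y x)
    {t y : T.V} (hy : y ∈ T.children t) : P y (T.parent y) ∣ P t t := by
  rw [child_parent hy, hlcm t]
  exact Finset.dvd_lcm hy

lemma hSc (hlead : ∀ x : T.V, 0 < (P x x).leadingCoeff ∧ 0 < (P x (T.parent x)).leadingCoeff)
    (hlcm : ∀ x : T.V, P x x = (T.children x).lcm fun y => P y x)
    {t y : T.V} (hy : y ∈ T.children t) :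
    P y (T.parent y) * (P t t / P y (T.parent y)) = P t t :=
  EuclideanDomain.mul_div_cancel' (Pq_ne hlead y) (Pq_dvd hlcm hy)

lemma hPty (hlead : ∀ x : T.V, 0 < (P x x).leadingCoeff ∧ 0 < (P x (T.parent x)).leadingCoeff)
    (hlcm : ∀ x : T.V, P x x = (T.children x).lcm fun y => P y x)
    (hdiv : ∀ x : T.V, ∀ y ∈ T.children x, P x y * P y x = P x x * P y y)
    {t y : T.V} (hy : y ∈ T.children t) :
    P t y = (P t t / P y (T.parent y)) * P y y := by
  have h1 := hdiv t y hy
  have h2 := hSc hlead hlcm hy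
  have h3 : P y (T.parent y) ≠ 0 := Pq_ne hlead y
  rw [child_parent hy] at h2 h3 ⊢
  apply mul_right_cancel₀ h3
  rw [h1]
  rw [show P t t / P y t * P y y * P y t = P y t * (P t t / P y t) * P y y from by ring, h2]

/-- the multiplicity/lcm argument: if r is a root of P t t then some child has
nonvanishing quotient -/
lemma exists_Sc_ne (hlead : ∀ x : T.V, 0 < (P x x).leadingCoeff ∧ 0 < (P x (T.parent x)).leadingCoeff)
    (hlcm : ∀ x : T.V, P x x = (T.children x).lcm fun y => P y x)
    {t : T.V} {r : ℝ} (h0 : (P t t).eval r = 0) :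
    ∃ y ∈ T.children t, (P t t / P y (T.parent y)).eval r ≠ 0 := by
  by_contra hall
  push_neg at hall
  have hne : P t t ≠ 0 := Pnn_ne hlead t
  obtain ⟨Q, hQ⟩ := (Polynomial.dvd_iff_isRoot).mpr h0
  have hQne : Q ≠ 0 := by
    intro h; rw [h, mul_zero] at hQ; exact hne hQ
  have hdvdQ : ∀ y ∈ T.children t, P y t ∣ Q := by
    intro y hy
    obtain ⟨R, hR⟩ := (Polynomial.dvd_iff_isRoot).mpr (hall y hy)
    have h2 := hSc hlead hlcm hy
    rw [hR] at h2
    rw [child_parent hy] at h2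
    -- h2 : P y t * ((X - C r) * R) = P t t
    rw [hQ] at h2
    have hx : (Polynomial.X - Polynomial.C r) ≠ (0 : Polynomial ℝ) := Polynomial.X_sub_C_ne_zero r
    have : (Polynomial.X - Polynomial.C r) * (P y t * R) = (Polynomial.X - Polynomial.C r) * Q := by
      rw [← h2]; ring
    have := mul_left_cancel₀ hx this
    exact ⟨R, this.symm⟩
  have hPdvd : P t t ∣ Q := by
    rw [hlcm t]
    exact Finset.lcm_dvd hdvdQ
  have hdeg := Polynomial.natDegree_le_of_dvd hPdvd hQne
  have hx : (Polynomial.X - Polynomial.C r) ≠ (0 : Polynomial ℝ) := Polynomial.X_sub_C_ne_zero r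
  have : (P t t).natDegree = 1 + Q.natDegree := by
    rw [hQ, Polynomial.natDegree_mul hx hQne, Polynomial.natDegree_X_sub_C]
  omega


/-- Key transfer identity: any local solution on the subtree below `t`
satisfies `u(t') P_{t,t}(r) = u(t) P_{t,t'}(r)`. -/
lemma lemD (hlam : ∀ t, 0 < lam t)
    (hlead : ∀ x : T.V, 0 < (P x x).leadingCoeff ∧ 0 < (P x (T.parent x)).leadingCoeff)
    (hrec : ∀ x : T.V, Polynomial.C (lam x) * P x (T.parent x) =
      (Polynomial.X - Polynomial.C (beta x)) * P x x -
        ∑ y ∈ T.children x, Polynomial.C (lam y) * P x y)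
    (hlcm : ∀ x : T.V, P x x = (T.children x).lcm fun y => P y x)
    (hdiv : ∀ x : T.V, ∀ y ∈ T.children x, P x y * P y x = P x x * P y y)
    (r : ℝ) :
    ∀ N : ℕ, ∀ t : T.V, {s | T.descend s t}.ncard ≤ N →
    ∀ u : T.V → ℂ,
    (∀ s, T.descend s t → (lam s : ℂ) * u (T.parent s) + (beta s : ℂ) * u s +
        ∑ y ∈ T.children s, (lam y : ℂ) * u y = (r : ℂ) * u s) →
    u (T.parent t) * (((P t t).eval r : ℝ) : ℂ) = u t * (((P t (T.parent t)).eval r : ℝ) : ℂ) := by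
  intro N
  induction N with
  | zero =>
    intro t hcard u _
    exfalso
    have hpos : 0 < {s | T.descend s t}.ncard :=
      (Set.ncard_pos (T.subtree_finite t)).mpr ⟨t, descend_refl t⟩
    omega
  | succ N ih =>
    intro t hcard u hu
    -- the evaluated recurrence
    have h0 := congrArg (Polynomial.eval r) (hrec t)
    simp only [Polynomial.eval_mul, Polynomial.eval_sub, Polynomial.eval_C, Polynomial.eval_X,
      Polynomial.eval_finset_sum] at h0
    have hevalC : (lam t : ℂ) * (((P t (T.parent t)).eval r : ℝ) : ℂ) =
        ((r : ℂ) - (beta t : ℂ)) * (((P t t).eval r : ℝ) : ℂ) -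
        ∑ y ∈ T.children t, (lam y : ℂ) * (((P t y).eval r : ℝ) : ℂ) := by
      exact_mod_cast h0
    -- the induction hypothesis at each child
    have hIH : ∀ y ∈ T.children t,
        u t * (((P y y).eval r : ℝ) : ℂ) = u y * (((P y (T.parent y)).eval r : ℝ) : ℂ) := by
      intro y hy
      have hcy : {s | T.descend s y}.ncard ≤ N := by
        have := subtree_card_lt hy
        omega
      have h := ih y hcy u (fun s hs => hu s (descend_trans hs (child_descend hy)))
      rw [child_parent hy] at h ⊢
      exact h
    -- the summation identity
    have hstep : (∑ y ∈ T.children t, (lam y : ℂ) * (((P t y).eval r : ℝ) : ℂ)) * u t =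
        (∑ y ∈ T.children t, (lam y : ℂ) * u y) * (((P t t).eval r : ℝ) : ℂ) := by
      rw [Finset.sum_mul, Finset.sum_mul]
      refine Finset.sum_congr rfl (fun y hy => ?_)
      have f1 : (((P t t).eval r : ℝ) : ℂ) =
          (((P y (T.parent y)).eval r : ℝ) : ℂ) * (((P t t / P y (T.parent y)).eval r : ℝ) : ℂ) := by
        have := congrArg (Polynomial.eval r) (hSc hlead hlcm hy).symm
        simp only [Polynomial.eval_mul] at this
        exact_mod_cast this
      have f2 : (((P t y).eval r : ℝ) : ℂ) =
          (((P t t / P y (T.parent y)).eval r : ℝ) : ℂ) * (((P y y).eval r : ℝ) : ℂ) := by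
        have := congrArg (Polynomial.eval r) (hPty hlead hlcm hdiv hy)
        simp only [Polynomial.eval_mul] at this
        exact_mod_cast this
      have f3 := hIH y hy
      linear_combination ((lam y : ℂ) * u t) * f2 +
        ((lam y : ℂ) * (((P t t / P y (T.parent y)).eval r : ℝ) : ℂ)) * f3 -
        ((lam y : ℂ) * u y) * f1
    have eqt := hu t (descend_refl t)
    have hlne : (lam t : ℂ) ≠ 0 := by
      exact_mod_cast (hlam t).ne'
    apply mul_left_cancel₀ hlne
    linear_combination (((P t t).eval r : ℝ) : ℂ) * eqt - u t * hevalC + hstep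


/-- If a local solution vanishes at the root and above but is not identically
zero, then some vertex of the subtree has two children whose `q`-polynomials
vanish at `r`. -/
lemma claimStar (hlam : ∀ t, 0 < lam t)
    (hlead : ∀ x : T.V, 0 < (P x x).leadingCoeff ∧ 0 < (P x (T.parent x)).leadingCoeff)
    (hrec : ∀ x : T.V, Polynomial.C (lam x) * P x (T.parent x) =
      (Polynomial.X - Polynomial.C (beta x)) * P x x -
        ∑ y ∈ T.children x, Polynomial.C (lam y) * P x y)
    (hlcm : ∀ x : T.V, P x x = (T.children x).lcm fun y => P y x)
    (hdiv : ∀ x : T.V, ∀ y ∈ T.children x, P x y * P y x = P x x * P y y)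
    (r : ℝ) :
    ∀ N : ℕ, ∀ t : T.V, {s | T.descend s t}.ncard ≤ N →
    ∀ u : T.V → ℂ,
    (∀ s, T.descend s t → (lam s : ℂ) * u (T.parent s) + (beta s : ℂ) * u s +
        ∑ y ∈ T.children s, (lam y : ℂ) * u y = (r : ℂ) * u s) →
    u (T.parent t) = 0 → u t = 0 → (∃ s, T.descend s t ∧ u s ≠ 0) →
    ∃ y : T.V, T.descend y t ∧ ∃ y₁ ∈ T.children y, ∃ y₂ ∈ T.children y,
      y₁ ≠ y₂ ∧ (P y₁ y).eval r = 0 ∧ (P y₂ y).eval r = 0 := by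
  intro N
  induction N with
  | zero =>
    intro t hcard u _ _ _ _
    exfalso
    have hpos : 0 < {s | T.descend s t}.ncard :=
      (Set.ncard_pos (T.subtree_finite t)).mpr ⟨t, descend_refl t⟩
    omega
  | succ N ih =>
    intro t hcard u hu hup hut ⟨s0, hs0, hs0ne⟩
    have hs0t : s0 ≠ t := fun h => hs0ne (h ▸ hut)
    obtain ⟨y₀, hy₀, hd0⟩ := exists_child_route hs0 hs0t
    have hres : ∀ z, z ∈ T.children t → ∀ s, T.descend s z →
        (lam s : ℂ) * u (T.parent s) + (beta s : ℂ) * u s +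
        ∑ y ∈ T.children s, (lam y : ℂ) * u y = (r : ℂ) * u s :=
      fun z hz s hs => hu s (descend_trans hs (child_descend hz))
    have hD : ∀ z, z ∈ T.children t →
        u z * (((P z (T.parent z)).eval r : ℝ) : ℂ) = 0 := by
      intro z hz
      have h := lemD hlam hlead hrec hlcm hdiv r ({s | T.descend s z}.ncard) z le_rfl u
        (hres z hz)
      rw [child_parent hz] at h ⊢
      rw [hut] at h
      rw [← h]
      ring
    by_cases h0 : u y₀ = 0
    · -- recurse into y₀
      have hcy : {s | T.descend s y₀}.ncard ≤ N := by
        have := subtree_card_lt hy₀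
        omega
      have hupy : u (T.parent y₀) = 0 := by rw [child_parent hy₀]; exact hut
      obtain ⟨y, hyd, rest⟩ := ih y₀ hcy u (hres y₀ hy₀) hupy h0 ⟨s0, hd0, hs0ne⟩
      exact ⟨y, descend_trans hyd (child_descend hy₀), rest⟩
    · -- u y₀ ≠ 0 : q at y₀ vanishes, find a second child
      have hq0 : (P y₀ (T.parent y₀)).eval r = 0 := by
        have := hD y₀ hy₀
        rcases mul_eq_zero.mp this with h | h
        · exact absurd h h0
        · exact_mod_cast h
      have eqt := hu t (descend_refl t)
      rw [hup, hut] at eqt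
      have hsum0 : ∑ y ∈ T.children t, (lam y : ℂ) * u y = 0 := by
        have : (lam t : ℂ) * 0 + (beta t : ℂ) * 0 +
            ∑ y ∈ T.children t, (lam y : ℂ) * u y = (r : ℂ) * 0 := eqt
        simpa using this
      have hex : ¬ ∀ y ∈ T.children t, y ≠ y₀ → (lam y : ℂ) * u y = 0 := by
        intro hall
        have := Finset.sum_eq_single y₀ hall (fun h => absurd hy₀ h)
        rw [hsum0] at this
        have hlne : (lam y₀ : ℂ) ≠ 0 := by exact_mod_cast (hlam y₀).ne'
        exact h0 (by
          rcases mul_eq_zero.mp this.symm with h | h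
          · exact absurd h hlne
          · exact h)
      push_neg at hex
      obtain ⟨y₁, hy₁, hne, hlu⟩ := hex
      have h1 : u y₁ ≠ 0 := by
        intro h
        exact hlu (by rw [h, mul_zero])
      have hq1 : (P y₁ (T.parent y₁)).eval r = 0 := by
        have := hD y₁ hy₁
        rcases mul_eq_zero.mp this with h | h
        · exact absurd h h1
        · exact_mod_cast h
      refine ⟨t, descend_refl t, y₀, hy₀, y₁, hy₁, Ne.symm hne, ?_, ?_⟩
      · rw [← child_parent hy₀]; exact hq0
      · rw [← child_parent hy₁]; exact hq1

lemma ne_of_descend_child {s y t : T.V} (hy : y ∈ T.children t) (hd : T.descend s y) :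
    s ≠ t := by
  intro h
  subst h
  have h1 := descend_level hd
  have h2 := child_level hy
  omega

/-- Construction of the quasi-eigenvector with boundary data given by the
tree polynomials. -/
lemma lemB (hlam : ∀ t, 0 < lam t)
    (hlead : ∀ x : T.V, 0 < (P x x).leadingCoeff ∧ 0 < (P x (T.parent x)).leadingCoeff)
    (hrec : ∀ x : T.V, Polynomial.C (lam x) * P x (T.parent x) =
      (Polynomial.X - Polynomial.C (beta x)) * P x x -
        ∑ y ∈ T.children x, Polynomial.C (lam y) * P x y)
    (hlcm : ∀ x : T.V, P x x = (T.children x).lcm fun y => P y x)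
    (hdiv : ∀ x : T.V, ∀ y ∈ T.children x, P x y * P y x = P x x * P y y)
    (r : ℝ) :
    ∀ N : ℕ, ∀ t : T.V, {s | T.descend s t}.ncard ≤ N →
    ∃ v : T.V → ℂ,
      (∀ s, ¬ T.descend s t → v s = 0) ∧
      (∀ s, T.descend s t → s ≠ t →
        (lam s : ℂ) * v (T.parent s) + (beta s : ℂ) * v s +
          ∑ y ∈ T.children s, (lam y : ℂ) * v y = (r : ℂ) * v s) ∧
      v t = (((P t t).eval r : ℝ) : ℂ) ∧
      (∑ y ∈ T.children t, (lam y : ℂ) * v y =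
        ((r : ℂ) - (beta t : ℂ)) * (((P t t).eval r : ℝ) : ℂ) -
          (lam t : ℂ) * (((P t (T.parent t)).eval r : ℝ) : ℂ)) ∧
      (∃ s, T.descend s t ∧ v s ≠ 0) := by
  intro N
  induction N with
  | zero =>
    intro t hcard
    exfalso
    have hpos : 0 < {s | T.descend s t}.ncard :=
      (Set.ncard_pos (T.subtree_finite t)).mpr ⟨t, descend_refl t⟩
    omega
  | succ N ih =>
    intro t hcard
    classical
    have hIH : ∀ y ∈ T.children t, ∃ v : T.V → ℂ,
        (∀ s, ¬ T.descend s y → v s = 0) ∧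
        (∀ s, T.descend s y → s ≠ y →
          (lam s : ℂ) * v (T.parent s) + (beta s : ℂ) * v s +
            ∑ w ∈ T.children s, (lam w : ℂ) * v w = (r : ℂ) * v s) ∧
        v y = (((P y y).eval r : ℝ) : ℂ) ∧
        (∑ w ∈ T.children y, (lam w : ℂ) * v w =
          ((r : ℂ) - (beta y : ℂ)) * (((P y y).eval r : ℝ) : ℂ) -
            (lam y : ℂ) * (((P y (T.parent y)).eval r : ℝ) : ℂ)) ∧
        (∃ s, T.descend s y ∧ v s ≠ 0) := by
      intro y hy
      have hcy : {s | T.descend s y}.ncard ≤ N := by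
        have := subtree_card_lt hy
        omega
      exact ih y hcy
    choose! vch hch1 hch2 hch3 hch4 hch5 using hIH
    set sC : T.V → ℂ := fun y => (((P t t / P y (T.parent y)).eval r : ℝ) : ℂ) with hsC
    set v : T.V → ℂ := fun s => if s = t then (((P t t).eval r : ℝ) : ℂ)
      else ∑ y ∈ T.children t, sC y * vch y s with hv
    have hvt : v t = (((P t t).eval r : ℝ) : ℂ) := by rw [hv]; simp
    have hcol : ∀ s y, y ∈ T.children t → T.descend s y → v s = sC y * vch y s := by
      intro s y hy hd
      have hst : s ≠ t := ne_of_descend_child hy hd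
      rw [hv]
      simp only [if_neg hst]
      refine Finset.sum_eq_single y (fun y' hy' hne => ?_) (fun h => absurd hy h)
      have : ¬ T.descend s y' := fun hd' => hne (child_route_unique hy' hy hd' hd)
      rw [hch1 y' hy' s this, mul_zero]
    have hsupp : ∀ s, ¬ T.descend s t → v s = 0 := by
      intro s hs
      have hst : s ≠ t := fun h => hs (h ▸ descend_refl t)
      rw [hv]
      simp only [if_neg hst]
      refine Finset.sum_eq_zero (fun y hy => ?_)
      have : ¬ T.descend s y := fun hd => hs (descend_trans hd (child_descend hy))
      rw [hch1 y hy s this, mul_zero]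
    -- the key scalar identities for each child
    have fS : ∀ y ∈ T.children t, (((P t t).eval r : ℝ) : ℂ) =
        (((P y (T.parent y)).eval r : ℝ) : ℂ) * sC y := by
      intro y hy
      have h := congrArg (Polynomial.eval r) (hSc hlead hlcm hy).symm
      simp only [Polynomial.eval_mul] at h
      show (((P t t).eval r : ℝ) : ℂ) = (((P y (T.parent y)).eval r : ℝ) : ℂ) *
        (((P t t / P y (T.parent y)).eval r : ℝ) : ℂ)
      exact_mod_cast h
    have fT : ∀ y ∈ T.children t, (((P t y).eval r : ℝ) : ℂ) =
        sC y * (((P y y).eval r : ℝ) : ℂ) := by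
      intro y hy
      have h := congrArg (Polynomial.eval r) (hPty hlead hlcm hdiv hy)
      simp only [Polynomial.eval_mul] at h
      show (((P t y).eval r : ℝ) : ℂ) = (((P t t / P y (T.parent y)).eval r : ℝ) : ℂ) *
        (((P y y).eval r : ℝ) : ℂ)
      exact_mod_cast h
    refine ⟨v, hsupp, ?_, hvt, ?_, ?_⟩
    · -- interior equations
      intro s hs hst
      obtain ⟨y, hy, hdy⟩ := exists_child_route hs hst
      by_cases hc : s = y
      · subst hc
        -- s is a child of t
        have h1 : v (T.parent s) = (((P t t).eval r : ℝ) : ℂ) := by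
          rw [child_parent hy, hvt]
        have h2 : v s = sC s * (((P s s).eval r : ℝ) : ℂ) := by
          rw [hcol s s hy (descend_refl s), hch3 s hy]
        have h3 : ∑ w ∈ T.children s, (lam w : ℂ) * v w =
            sC s * (((r : ℂ) - (beta s : ℂ)) * (((P s s).eval r : ℝ) : ℂ) -
              (lam s : ℂ) * (((P s (T.parent s)).eval r : ℝ) : ℂ)) := by
          rw [← hch4 s hy, Finset.mul_sum]
          refine Finset.sum_congr rfl (fun w hw => ?_)
          rw [hcol w s hy (child_descend hw)]
          ring
        rw [h1, h2, h3]
        have hfS := fS s hy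
        linear_combination (lam s : ℂ) * hfS
      · -- s is strictly inside the subtree of the child y
        have heq := hch2 y hy s hdy hc
        have h1 : v (T.parent s) = sC y * vch y (T.parent s) :=
          hcol (T.parent s) y hy (descend_parent_of_ne hdy hc)
        have h2 : v s = sC y * vch y s := hcol s y hy hdy
        have h3 : ∑ w ∈ T.children s, (lam w : ℂ) * v w =
            sC y * ∑ w ∈ T.children s, (lam w : ℂ) * vch y w := by
          rw [Finset.mul_sum]
          refine Finset.sum_congr rfl (fun w hw => ?_)
          rw [hcol w y hy (descend_trans (child_descend hw) hdy)]
          ring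
        rw [h1, h2, h3]
        linear_combination sC y * heq
    · -- the root summation identity
      have h0 := congrArg (Polynomial.eval r) (hrec t)
      simp only [Polynomial.eval_mul, Polynomial.eval_sub, Polynomial.eval_C, Polynomial.eval_X,
        Polynomial.eval_finset_sum] at h0
      have hevalC : (lam t : ℂ) * (((P t (T.parent t)).eval r : ℝ) : ℂ) =
          ((r : ℂ) - (beta t : ℂ)) * (((P t t).eval r : ℝ) : ℂ) -
          ∑ y ∈ T.children t, (lam y : ℂ) * (((P t y).eval r : ℝ) : ℂ) := by
        exact_mod_cast h0
      have hsum : ∑ y ∈ T.children t, (lam y : ℂ) * v y =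
          ∑ y ∈ T.children t, (lam y : ℂ) * (((P t y).eval r : ℝ) : ℂ) := by
        refine Finset.sum_congr rfl (fun y hy => ?_)
        rw [hcol y y hy (descend_refl y), hch3 y hy, fT y hy]
      rw [hsum]
      linear_combination hevalC
    · -- nontriviality
      by_cases hpt : (P t t).eval r = 0
      · obtain ⟨y, hy, hSne⟩ := exists_Sc_ne hlead hlcm hpt
        obtain ⟨s1, hs1d, hs1ne⟩ := hch5 y hy
        refine ⟨s1, descend_trans hs1d (child_descend hy), ?_⟩
        rw [hcol s1 y hy hs1d]
        refine mul_ne_zero ?_ hs1ne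
        show (((P t t / P y (T.parent y)).eval r : ℝ) : ℂ) ≠ 0
        exact_mod_cast hSne
      · refine ⟨t, descend_refl t, ?_⟩
        rw [hvt]
        exact_mod_cast hpt


/-- eigenvector construction when `P_{t,t'}(r) = 0` -/
lemma eigA (hlam : ∀ t, 0 < lam t)
    (hlead : ∀ x : T.V, 0 < (P x x).leadingCoeff ∧ 0 < (P x (T.parent x)).leadingCoeff)
    (hrec : ∀ x : T.V, Polynomial.C (lam x) * P x (T.parent x) =
      (Polynomial.X - Polynomial.C (beta x)) * P x x -
        ∑ y ∈ T.children x, Polynomial.C (lam y) * P x y)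
    (hlcm : ∀ x : T.V, P x x = (T.children x).lcm fun y => P y x)
    (hdiv : ∀ x : T.V, ∀ y ∈ T.children x, P x y * P y x = P x x * P y y)
    (r : ℝ) (t : T.V) (hq : (P t (T.parent t)).eval r = 0) :
    ∃ w : T.V → ℂ, (∀ s, ¬ T.descend s t → w s = 0) ∧
      (∀ s, T.descend s t → (lam s : ℂ) * w (T.parent s) + (beta s : ℂ) * w s +
        ∑ y ∈ T.children s, (lam y : ℂ) * w y = (r : ℂ) * w s) ∧
      ∃ s, T.descend s t ∧ w s ≠ 0 := by
  obtain ⟨v, hsupp, h2, hvt, hsum, hnz⟩ :=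
    lemB hlam hlead hrec hlcm hdiv r ({s | T.descend s t}.ncard) t le_rfl
  refine ⟨v, hsupp, ?_, hnz⟩
  intro s hs
  rcases eq_or_ne s t with rfl | hne
  · have hz : v (T.parent s) = 0 := hsupp _ (not_descend_parent s)
    have hqC : (((P s (T.parent s)).eval r : ℝ) : ℂ) = 0 := by exact_mod_cast hq
    rw [hz, hvt, hsum, hqC]
    ring
  · exact h2 s hs hne

open Classical in
/-- the defect of an eigenvector of a subtree, viewed inside a larger tree,
is concentrated at the parent of the subtree root -/
lemma quasi {c y : T.V} (hc : c ∈ T.children y) {w : T.V → ℂ} {r : ℝ}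
    (hsupp : ∀ s, ¬ T.descend s c → w s = 0)
    (hLS : ∀ s, T.descend s c → (lam s : ℂ) * w (T.parent s) + (beta s : ℂ) * w s +
      ∑ z ∈ T.children s, (lam z : ℂ) * w z = (r : ℂ) * w s) :
    ∀ s : T.V, (lam s : ℂ) * w (T.parent s) + (beta s : ℂ) * w s +
      ∑ z ∈ T.children s, (lam z : ℂ) * w z =
      (r : ℂ) * w s + (if s = y then (lam c : ℂ) * w c else 0) := by
  classical
  intro s
  by_cases hd : T.descend s c
  · have hne : s ≠ y := by
      intro h
      subst h
      have := descend_level hd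
      have := child_level hc
      omega
    rw [if_neg hne, hLS s hd]
    ring
  · by_cases hsy : s = y
    · subst hsy
      have hws : w s = 0 := hsupp s hd
      have hwp : w (T.parent s) = 0 := by
        refine hsupp _ (fun h => ?_)
        have := descend_level h
        have := T.level_parent s
        have := child_level hc
        omega
      have hsum : ∑ z ∈ T.children s, (lam z : ℂ) * w z = (lam c : ℂ) * w c := by
        refine Finset.sum_eq_single c (fun z hz hzc => ?_) (fun h => absurd hc h)
        have : ¬ T.descend z c := by
          intro hzd
          refine hzc (descend_eq_of_level hzd ?_)
          have := child_level hz
          have := child_level hc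
          omega
        rw [hsupp z this, mul_zero]
      rw [hws, hwp, hsum, if_pos rfl]
      ring
    · have hws : w s = 0 := hsupp s hd
      have hwp : w (T.parent s) = 0 :=
        hsupp _ (fun h => hd (descend_parent h))
      have hsum : ∑ z ∈ T.children s, (lam z : ℂ) * w z = 0 := by
        refine Finset.sum_eq_zero (fun z hz => ?_)
        have : ¬ T.descend z c := by
          intro hzd
          rcases eq_or_ne z c with rfl | hzc
          · exact hsy ((child_parent hz).symm.trans (child_parent hc))
          · exact hd ((child_parent hz) ▸ descend_parent_of_ne hzd hzc)
        rw [hsupp z this, mul_zero]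
      rw [hws, hwp, hsum, if_neg hsy]
      ring

end Poly
end StmtAux
open Classical in
/-- The spectrum of the truncated Jacobi matrix `J_x` on the finite subtree `Γ_x`:
a real `r` is an eigenvalue of `J_x` iff `P_{x,x'}(r) = 0` or there are `y ∈ Γ_x`
and distinct `y₁, y₂ ∈ N_y` with `P_{y₁,y}(r) = P_{y₂,y}(r) = 0`. -/
theorem stmt_14 (T : JTree) (lam beta : T.V → ℝ) (hlam : ∀ t, 0 < lam t)
    (P : T.V → T.V → Polynomial ℝ)
    (hlead : ∀ x : T.V, 0 < (P x x).leadingCoeff ∧ 0 < (P x (T.parent x)).leadingCoeff)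
    (hrec : ∀ x : T.V, Polynomial.C (lam x) * P x (T.parent x) =
      (Polynomial.X - Polynomial.C (beta x)) * P x x -
        ∑ y ∈ T.children x, Polynomial.C (lam y) * P x y)
    (hlcm : ∀ x : T.V, P x x = (T.children x).lcm fun y => P y x)
    (hdiv : ∀ x : T.V, ∀ y ∈ T.children x, P x y * P y x = P x x * P y y)
    (x : T.V) (r : ℝ) :
    (∃ u : T.V → ℂ, (∃ t, u t ≠ 0) ∧ (∀ t, ¬ T.descend t x → u t = 0) ∧
      (∀ t, T.descend t x →
        (if t = x then 0 else (lam t : ℂ) * u (T.parent t)) + (beta t : ℂ) * u t +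
          ∑ y ∈ T.children t, (lam y : ℂ) * u y = (r : ℂ) * u t)) ↔
    ((P x (T.parent x)).eval r = 0 ∨
      ∃ y : T.V, T.descend y x ∧ ∃ y₁ ∈ T.children y, ∃ y₂ ∈ T.children y,
        y₁ ≠ y₂ ∧ (P y₁ y).eval r = 0 ∧ (P y₂ y).eval r = 0) := by
  -- a converter from full local equations to the truncated form of the statement
  have toThm : ∀ u : T.V → ℂ, (∀ s, ¬ T.descend s x → u s = 0) →
      (∀ s, T.descend s x → (lam s : ℂ) * u (T.parent s) + (beta s : ℂ) * u s +
        ∑ y ∈ T.children s, (lam y : ℂ) * u y = (r : ℂ) * u s) →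
      (∀ t, T.descend t x →
        (if t = x then 0 else (lam t : ℂ) * u (T.parent t)) + (beta t : ℂ) * u t +
          ∑ y ∈ T.children t, (lam y : ℂ) * u y = (r : ℂ) * u t) := by
    intro u hsupp hLS t ht
    rcases eq_or_ne t x with rfl | hne
    · rw [if_pos rfl]
      have h := hLS t (StmtAux.descend_refl t)
      rw [hsupp _ (StmtAux.not_descend_parent t)] at h
      linear_combination h
    · rw [if_neg hne]
      exact hLS t ht
  constructor
  · rintro ⟨u, ⟨t0, ht0⟩, hsupp, heq⟩
    have hup0 : u (T.parent x) = 0 := hsupp _ (StmtAux.not_descend_parent x)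
    have hLS : ∀ s, T.descend s x → (lam s : ℂ) * u (T.parent s) + (beta s : ℂ) * u s +
        ∑ y ∈ T.children s, (lam y : ℂ) * u y = (r : ℂ) * u s := by
      intro s hs
      have h := heq s hs
      rcases eq_or_ne s x with rfl | hne
      · rw [if_pos rfl] at h
        rw [hup0]
        linear_combination h
      · rw [if_neg hne] at h
        exact h
    have hdt0 : T.descend t0 x := by
      by_contra h
      exact ht0 (hsupp t0 h)
    by_cases hux : u x = 0
    · exact Or.inr (StmtAux.claimStar hlam hlead hrec hlcm hdiv r ({s | T.descend s x}.ncard) x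
        le_rfl u hLS hup0 hux ⟨t0, hdt0, ht0⟩)
    · left
      have h := StmtAux.lemD hlam hlead hrec hlcm hdiv r ({s | T.descend s x}.ncard) x le_rfl u hLS
      rw [hup0, zero_mul] at h
      rcases mul_eq_zero.mp h.symm with h' | h'
      · exact absurd h' hux
      · exact_mod_cast h'
  · rintro (hq | ⟨y, hyd, y₁, hy₁, y₂, hy₂, hne, hq1, hq2⟩)
    · obtain ⟨w, hsupp, hLS, s1, hs1d, hs1ne⟩ := StmtAux.eigA hlam hlead hrec hlcm hdiv r x hq
      exact ⟨w, ⟨s1, hs1ne⟩, hsupp, toThm w hsupp hLS⟩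
    · -- two children with vanishing q-polynomials
      have hq1' : (P y₁ (T.parent y₁)).eval r = 0 := by rw [StmtAux.child_parent hy₁]; exact hq1
      have hq2' : (P y₂ (T.parent y₂)).eval r = 0 := by rw [StmtAux.child_parent hy₂]; exact hq2
      obtain ⟨w₁, hsupp1, hLS1, s1, hs1d, hs1ne⟩ := StmtAux.eigA hlam hlead hrec hlcm hdiv r y₁ hq1'
      obtain ⟨w₂, hsupp2, hLS2, s2, hs2d, hs2ne⟩ := StmtAux.eigA hlam hlead hrec hlcm hdiv r y₂ hq2'
      have hd1x : ∀ s, T.descend s y₁ → T.descend s x :=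
        fun s hs => StmtAux.descend_trans (StmtAux.descend_trans hs (StmtAux.child_descend hy₁)) hyd
      have hd2x : ∀ s, T.descend s y₂ → T.descend s x :=
        fun s hs => StmtAux.descend_trans (StmtAux.descend_trans hs (StmtAux.child_descend hy₂)) hyd
      have hquasi1 := StmtAux.quasi hy₁ hsupp1 hLS1
      have hquasi2 := StmtAux.quasi hy₂ hsupp2 hLS2
      by_cases h1 : w₁ y₁ = 0
      · have hsupp' : ∀ s, ¬ T.descend s x → w₁ s = 0 :=
          fun s hs => hsupp1 s (fun h => hs (hd1x s h))
        have hLS' : ∀ s, T.descend s x → (lam s : ℂ) * w₁ (T.parent s) + (beta s : ℂ) * w₁ s +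
            ∑ z ∈ T.children s, (lam z : ℂ) * w₁ z = (r : ℂ) * w₁ s := by
          intro s _
          have h := hquasi1 s
          rcases eq_or_ne s y with rfl | hsy
          · rw [if_pos rfl, h1, mul_zero, add_zero] at h
            exact h
          · rw [if_neg hsy, add_zero] at h
            exact h
        exact ⟨w₁, ⟨s1, hs1ne⟩, hsupp', toThm w₁ hsupp' hLS'⟩
      · by_cases h2 : w₂ y₂ = 0
        · have hsupp' : ∀ s, ¬ T.descend s x → w₂ s = 0 :=
            fun s hs => hsupp2 s (fun h => hs (hd2x s h))
          have hLS' : ∀ s, T.descend s x → (lam s : ℂ) * w₂ (T.parent s) + (beta s : ℂ) * w₂ s +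
              ∑ z ∈ T.children s, (lam z : ℂ) * w₂ z = (r : ℂ) * w₂ s := by
            intro s _
            have h := hquasi2 s
            rcases eq_or_ne s y with rfl | hsy
            · rw [if_pos rfl, h2, mul_zero, add_zero] at h
              exact h
            · rw [if_neg hsy, add_zero] at h
              exact h
          exact ⟨w₂, ⟨s2, hs2ne⟩, hsupp', toThm w₂ hsupp' hLS'⟩
        · -- genuine linear combination
          set a : ℂ := (lam y₂ : ℂ) * w₂ y₂ with ha
          set b : ℂ := (lam y₁ : ℂ) * w₁ y₁ with hb
          set u : T.V → ℂ := fun s => a * w₁ s - b * w₂ s with hu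
          have hus : ∀ s, u s = a * w₁ s - b * w₂ s := fun s => rfl
          have hsupp' : ∀ s, ¬ T.descend s x → u s = 0 := by
            intro s hs
            rw [hus, hsupp1 s (fun h => hs (hd1x s h)), hsupp2 s (fun h => hs (hd2x s h))]
            ring
          have hune : u s1 ≠ 0 := by
            have hw2 : w₂ s1 = 0 := by
              refine hsupp2 s1 (fun h => ?_)
              exact hne (StmtAux.child_route_unique hy₁ hy₂ hs1d h)
            rw [hus, hw2, mul_zero, sub_zero]
            refine mul_ne_zero (mul_ne_zero ?_ h2) hs1ne
            exact_mod_cast (hlam y₂).ne'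
          have hLS' : ∀ s, T.descend s x → (lam s : ℂ) * u (T.parent s) + (beta s : ℂ) * u s +
              ∑ z ∈ T.children s, (lam z : ℂ) * u z = (r : ℂ) * u s := by
            intro s _
            have hq1s := hquasi1 s
            have hq2s := hquasi2 s
            have hsplit : ∑ z ∈ T.children s, (lam z : ℂ) * u z =
                a * (∑ z ∈ T.children s, (lam z : ℂ) * w₁ z) -
                b * (∑ z ∈ T.children s, (lam z : ℂ) * w₂ z) := by
              rw [Finset.mul_sum, Finset.mul_sum, ← Finset.sum_sub_distrib]
              refine Finset.sum_congr rfl (fun z _ => ?_)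
              rw [hus]
              ring
            rw [hus (T.parent s), hus s, hsplit]
            rcases eq_or_ne s y with rfl | hsy
            · rw [if_pos rfl] at hq1s hq2s
              have : a * ((lam y₁ : ℂ) * w₁ y₁) - b * ((lam y₂ : ℂ) * w₂ y₂) = 0 := by
                rw [ha, hb]; ring
              linear_combination a * hq1s - b * hq2s
            · rw [if_neg hsy, add_zero] at hq1s hq2s
              linear_combination a * hq1s - b * hq2s
          exact ⟨u, ⟨s1, hune⟩, hsupp', toThm u hsupp' hLS'⟩
end

section
/- Let J_x be the truncation of a Jacobi operator to the finite subtree Γ_x and suppose there exist y ∈ Γ_x and distinct y₁, y₂ ∈ N_y and a real number r, together with nonzero functions u₁ on Γ_{y₁} and u₂ on Γ_{y₂} with J_{y₁}u₁ = r u₁, J_{y₂}u₂ = r u₂, u₁(y₁) ≠ 0, u₂(y₂) ≠ 0. Then the function u on Γ_x defined by u(t) = λ_{y₂} u₂(y₂) u₁(t) for t ∈ Γ_{y₁}, u(t) = −λ_{y₁} u₁(y₁) u₂(t) for t ∈ Γ_{y₂}, and u(t) = 0 otherwise, is a nonzero eigenvector of J_x with eigenvalue r. -/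
namespace JTree

variable (T : JTree)

theorem level_iterate (k : ℕ) (t : T.V) :
    T.level (T.parent^[k] t) = T.level t + k := by
  induction k generalizing t with
  | zero => simp
  | succ n ih =>
      rw [Function.iterate_succ_apply, ih, T.level_parent]; omega

theorem descend_self (t : T.V) : T.descend t t := ⟨0, rfl⟩

theorem descend_level {t x : T.V} (h : T.descend t x) : T.level t ≤ T.level x := by
  obtain ⟨k, hk⟩ := h
  rw [← hk, T.level_iterate]; omega

theorem descend_unique {t z₁ z₂ : T.V} (h1 : T.descend t z₁) (h2 : T.descend t z₂)
    (hl : T.level z₁ = T.level z₂) : z₁ = z₂ := by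
  obtain ⟨k, hk⟩ := h1
  obtain ⟨l, hl'⟩ := h2
  have e1 := T.level_iterate k t
  have e2 := T.level_iterate l t
  rw [hk] at e1; rw [hl'] at e2
  have : k = l := by omega
  rw [← hk, ← hl', this]

theorem descend_parent {t z : T.V} (h : T.descend t z) (hne : t ≠ z) :
    T.descend (T.parent t) z := by
  obtain ⟨k, hk⟩ := h
  cases k with
  | zero => exact absurd hk hne
  | succ m => exact ⟨m, by rw [← Function.iterate_succ_apply]; exact hk⟩

theorem descend_of_parent {w t z : T.V} (hw : T.parent w = t) (h : T.descend t z) :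
    T.descend w z := by
  obtain ⟨k, hk⟩ := h
  exact ⟨k + 1, by rw [Function.iterate_succ_apply, hw]; exact hk⟩

end JTree

open Classical in
/-- Gluing eigenvectors of two sibling truncations: if `J_{y₁}u₁ = r u₁`,
`J_{y₂}u₂ = r u₂` with `u₁(y₁) ≠ 0 ≠ u₂(y₂)`, then
`u = λ_{y₂}u₂(y₂)·u₁` on `Γ_{y₁}`, `u = −λ_{y₁}u₁(y₁)·u₂` on `Γ_{y₂}`, `u = 0`
elsewhere, is a nonzero eigenvector of the truncation `J_x` with eigenvalue `r`. -/
theorem stmt_15 (T : JTree) (lam beta : T.V → ℝ) (hlam : ∀ t, 0 < lam t)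
    (x y : T.V) (hy : T.descend y x)
    (y₁ y₂ : T.V) (h1 : y₁ ∈ T.children y) (h2 : y₂ ∈ T.children y) (hne : y₁ ≠ y₂)
    (r : ℝ) (u₁ u₂ : T.V → ℂ)
    (hu₁0 : ∀ t, ¬ T.descend t y₁ → u₁ t = 0)
    (hu₂0 : ∀ t, ¬ T.descend t y₂ → u₂ t = 0)
    (hu₁ : ∀ t, T.descend t y₁ →
      (if t = y₁ then 0 else (lam t : ℂ) * u₁ (T.parent t)) + (beta t : ℂ) * u₁ t +
        ∑ w ∈ T.children t, (lam w : ℂ) * u₁ w = (r : ℂ) * u₁ t)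
    (hu₂ : ∀ t, T.descend t y₂ →
      (if t = y₂ then 0 else (lam t : ℂ) * u₂ (T.parent t)) + (beta t : ℂ) * u₂ t +
        ∑ w ∈ T.children t, (lam w : ℂ) * u₂ w = (r : ℂ) * u₂ t)
    (hn₁ : u₁ y₁ ≠ 0) (hn₂ : u₂ y₂ ≠ 0)
    (u : T.V → ℂ)
    (hu : ∀ t, u t = if T.descend t y₁ then (lam y₂ : ℂ) * u₂ y₂ * u₁ t
      else if T.descend t y₂ then -((lam y₁ : ℂ) * u₁ y₁ * u₂ t) else 0) :
    (∃ t, u t ≠ 0) ∧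
    (∀ t, T.descend t x →
      (if t = x then 0 else (lam t : ℂ) * u (T.parent t)) + (beta t : ℂ) * u t +
        ∑ w ∈ T.children t, (lam w : ℂ) * u w = (r : ℂ) * u t) := by
  have hp1 : T.parent y₁ = y := (T.mem_children y y₁).1 h1
  have hp2 : T.parent y₂ = y := (T.mem_children y y₂).1 h2
  have hlvl : T.level y₁ = T.level y₂ := by
    have e1 := T.level_parent y₁
    have e2 := T.level_parent y₂
    rw [hp1] at e1; rw [hp2] at e2; omega
  have hl1y : T.level y₁ < T.level y := by
    have := T.level_parent y₁; rw [hp1] at this; omega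
  have hl2y : T.level y₂ < T.level y := by
    have := T.level_parent y₂; rw [hp2] at this; omega
  -- disjointness of the two subtrees
  have hdisj : ∀ t, T.descend t y₁ → T.descend t y₂ → False := fun t ha hb =>
    hne (T.descend_unique ha hb hlvl)
  have hyn1 : ¬ T.descend y y₁ := fun h => absurd (T.descend_level h) (by omega)
  have hyn2 : ¬ T.descend y y₂ := fun h => absurd (T.descend_level h) (by omega)
  -- values of u
  have hu_of1 : ∀ t, T.descend t y₁ → u t = (lam y₂ : ℂ) * u₂ y₂ * u₁ t := by
    intro t ht; rw [hu t, if_pos ht]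
  have hu_of2 : ∀ t, T.descend t y₂ → u t = -((lam y₁ : ℂ) * u₁ y₁ * u₂ t) := by
    intro t ht; rw [hu t, if_neg (fun h => hdisj t h ht), if_pos ht]
  have hu0 : ∀ t, ¬ T.descend t y₁ → ¬ T.descend t y₂ → u t = 0 := by
    intro t h1' h2'; rw [hu t, if_neg h1', if_neg h2']
  have huy : u y = 0 := hu0 y hyn1 hyn2
  constructor
  · refine ⟨y₁, ?_⟩
    rw [hu_of1 y₁ (T.descend_self y₁)]
    exact mul_ne_zero (mul_ne_zero (by exact_mod_cast (hlam y₂).ne') hn₂) hn₁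
  intro t htx
  by_cases hA : T.descend t y₁
  · -- t in Γ_{y₁}
    have htnx : t ≠ x := by
      intro h; subst h
      have l1 := T.descend_level hA
      have l2 := T.descend_level hy
      omega
    rw [if_neg htnx]
    have hut : u t = (lam y₂ : ℂ) * u₂ y₂ * u₁ t := hu_of1 t hA
    have hch : ∀ w ∈ T.children t, u w = (lam y₂ : ℂ) * u₂ y₂ * u₁ w := by
      intro w hw
      have hpw : T.parent w = t := (T.mem_children t w).1 hw
      by_cases hwd : T.descend w y₁
      · exact hu_of1 w hwd
      · have hwd2 : ¬ T.descend w y₂ := by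
          intro ⟨k, hk⟩
          cases k with
          | zero =>
              simp only [Function.iterate_zero, id] at hk
              subst hk
              rw [hpw] at hp2
              exact hyn1 (hp2 ▸ hA)
          | succ m =>
              exact hdisj t hA ⟨m, by rw [← hpw, ← Function.iterate_succ_apply]; exact hk⟩
        rw [hu0 w hwd hwd2, hu₁0 w hwd, mul_zero]
    have hpar : (lam t : ℂ) * u (T.parent t) =
        (lam y₂ : ℂ) * u₂ y₂ * (if t = y₁ then 0 else (lam t : ℂ) * u₁ (T.parent t)) := by
      by_cases hty : t = y₁
      · subst hty; rw [if_pos rfl, hp1, huy]; ring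
      · rw [if_neg hty, hu_of1 _ (T.descend_parent hA hty)]; ring
    calc (lam t : ℂ) * u (T.parent t) + (beta t : ℂ) * u t +
        ∑ w ∈ T.children t, (lam w : ℂ) * u w
        = (lam y₂ : ℂ) * u₂ y₂ *
          ((if t = y₁ then 0 else (lam t : ℂ) * u₁ (T.parent t)) + (beta t : ℂ) * u₁ t +
            ∑ w ∈ T.children t, (lam w : ℂ) * u₁ w) := by
          rw [hpar, hut, Finset.sum_congr rfl (fun w hw => by rw [hch w hw])]
          rw [mul_add, mul_add, Finset.mul_sum]
          congr 1
          · ring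
          · exact Finset.sum_congr rfl (fun w _ => by ring)
      _ = (lam y₂ : ℂ) * u₂ y₂ * ((r : ℂ) * u₁ t) := by rw [hu₁ t hA]
      _ = (r : ℂ) * u t := by rw [hut]; ring
  · by_cases hB : T.descend t y₂
    · -- t in Γ_{y₂}
      have htnx : t ≠ x := by
        intro h; subst h
        have l1 := T.descend_level hB
        have l2 := T.descend_level hy
        omega
      rw [if_neg htnx]
      have hut : u t = -((lam y₁ : ℂ) * u₁ y₁ * u₂ t) := hu_of2 t hB
      have hch : ∀ w ∈ T.children t, u w = -((lam y₁ : ℂ) * u₁ y₁ * u₂ w) := by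
        intro w hw
        have hpw : T.parent w = t := (T.mem_children t w).1 hw
        by_cases hwd : T.descend w y₂
        · exact hu_of2 w hwd
        · have hwd1 : ¬ T.descend w y₁ := by
            intro ⟨k, hk⟩
            cases k with
            | zero =>
                simp only [Function.iterate_zero, id] at hk
                subst hk
                rw [hpw] at hp1
                exact hyn2 (hp1 ▸ hB)
            | succ m =>
                exact hdisj t ⟨m, by rw [← hpw, ← Function.iterate_succ_apply]; exact hk⟩ hB
          rw [hu0 w hwd1 hwd, hu₂0 w hwd, mul_zero, neg_zero]
      have hpar : (lam t : ℂ) * u (T.parent t) =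
          -((lam y₁ : ℂ) * u₁ y₁) * (if t = y₂ then 0 else (lam t : ℂ) * u₂ (T.parent t)) := by
        by_cases hty : t = y₂
        · subst hty; rw [if_pos rfl, hp2, huy]; ring
        · rw [if_neg hty, hu_of2 _ (T.descend_parent hB hty)]; ring
      calc (lam t : ℂ) * u (T.parent t) + (beta t : ℂ) * u t +
          ∑ w ∈ T.children t, (lam w : ℂ) * u w
          = -((lam y₁ : ℂ) * u₁ y₁) *
            ((if t = y₂ then 0 else (lam t : ℂ) * u₂ (T.parent t)) + (beta t : ℂ) * u₂ t +
              ∑ w ∈ T.children t, (lam w : ℂ) * u₂ w) := by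
            rw [hpar, hut, Finset.sum_congr rfl (fun w hw => by rw [hch w hw])]
            rw [mul_add, mul_add, Finset.mul_sum]
            congr 1
            · ring
            · exact Finset.sum_congr rfl (fun w _ => by ring)
        _ = -((lam y₁ : ℂ) * u₁ y₁) * ((r : ℂ) * u₂ t) := by rw [hu₂ t hB]
        _ = (r : ℂ) * u t := by rw [hut]; ring
    · -- t outside both subtrees
      have hut : u t = 0 := hu0 t hA hB
      have hpar0 : u (T.parent t) = 0 := by
        refine hu0 _ (fun h => hA ?_) (fun h => hB ?_)
        · exact T.descend_of_parent rfl h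
        · exact T.descend_of_parent rfl h
      have hsum : ∑ w ∈ T.children t, (lam w : ℂ) * u w = 0 := by
        by_cases hty : t = y
        · subst hty
          have houter : ∀ w ∈ T.children t, w ∉ ({y₁, y₂} : Finset T.V) →
              (lam w : ℂ) * u w = 0 := by
            intro w hw hwn
            simp only [Finset.mem_insert, Finset.mem_singleton, not_or] at hwn
            have hpw : T.parent w = t := (T.mem_children t w).1 hw
            have hw1 : ¬ T.descend w y₁ := by
              intro ⟨k, hk⟩
              cases k with
              | zero => exact hwn.1 hk
              | succ m =>
                  exact hyn1 ⟨m, by rw [← hpw, ← Function.iterate_succ_apply]; exact hk⟩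
            have hw2 : ¬ T.descend w y₂ := by
              intro ⟨k, hk⟩
              cases k with
              | zero => exact hwn.2 hk
              | succ m =>
                  exact hyn2 ⟨m, by rw [← hpw, ← Function.iterate_succ_apply]; exact hk⟩
            rw [hu0 w hw1 hw2, mul_zero]
          have hsub : ({y₁, y₂} : Finset T.V) ⊆ T.children t := by
            intro w hw
            simp only [Finset.mem_insert, Finset.mem_singleton] at hw
            rcases hw with h | h <;> subst h <;> assumption
          rw [← Finset.sum_subset hsub houter, Finset.sum_pair hne,
            hu_of1 y₁ (T.descend_self y₁), hu_of2 y₂ (T.descend_self y₂)]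
          ring
        · refine Finset.sum_eq_zero (fun w hw => ?_)
          have hpw : T.parent w = t := (T.mem_children t w).1 hw
          have hw1 : ¬ T.descend w y₁ := by
            intro ⟨k, hk⟩
            cases k with
            | zero =>
                simp only [Function.iterate_zero, id] at hk
                subst hk; exact hty (hpw ▸ hp1.symm ▸ rfl)
            | succ m =>
                exact hA ⟨m, by rw [← hpw, ← Function.iterate_succ_apply]; exact hk⟩
          have hw2 : ¬ T.descend w y₂ := by
            intro ⟨k, hk⟩
            cases k with
            | zero =>
                simp only [Function.iterate_zero, id] at hk
                subst hk; exact hty (hpw ▸ hp2.symm ▸ rfl)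
            | succ m =>
                exact hB ⟨m, by rw [← hpw, ← Function.iterate_succ_apply]; exact hk⟩
          rw [hu0 w hw1 hw2, mul_zero]
      rw [hut, hsum]
      by_cases htx' : t = x
      · rw [if_pos htx']; ring
      · rw [if_neg htx', hpar0]; ring
end

section
/- There exists a classical Jacobi matrix J with positive off-diagonal entries λ_n and real diagonal entries −β_n (acting by (Jx)_n = λ_n x_{n+1} − β_n x_n + λ_{n−1} x_{n−1}) that is not essentially self-adjoint on ℓ²(ℕ₀), while the Jacobi matrix J' with the same off-diagonal entries and zero diagonal ((J'x)_n = λ_n x_{n+1} + λ_{n−1} x_{n−1}) is essentially self-adjoint. Explicitly one may take q > 1, λ_{2n} = λ_{2n+1} = q^n, β_{2n+1} = a q^n for a fixed a ≠ 0, and β_{2n} = a^{−1}(q^n + q^{n−1}). -/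
open Complex Filter


/-- There is a classical Jacobi matrix `(Jx)_n = λ_n x_{n+1} − β_n x_n + λ_{n−1}x_{n−1}`
(with `λ_n > 0`) which is not essentially self-adjoint — i.e. every solution of the
formal eigenvalue equation at `0` is square summable — while the Jacobi matrix
`(J'x)_n = λ_n x_{n+1} + λ_{n−1} x_{n−1}` with the same off-diagonal entries and zero
diagonal is essentially self-adjoint — witnessed by a non-square-summable solution of
`J'x = 0`. -/
theorem stmt_16 :
    ∃ lam : ℕ → ℝ, ∃ beta : ℕ → ℝ, (∀ n, 0 < lam n) ∧
      (∀ x : ℕ → ℂ,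
        (∀ n : ℕ, 1 ≤ n →
          (lam n : ℂ) * x (n + 1) - (beta n : ℂ) * x n + (lam (n - 1) : ℂ) * x (n - 1) = 0) →
        Summable fun n => ‖x n‖ ^ 2) ∧
      (∃ x : ℕ → ℂ,
        (∀ n : ℕ, 1 ≤ n →
          (lam n : ℂ) * x (n + 1) + (lam (n - 1) : ℂ) * x (n - 1) = 0) ∧
        ¬ Summable fun n => ‖x n‖ ^ 2) := by
  refine ⟨fun n => 4 ^ (n / 2),
    fun n => if n % 2 = 1 then 4 ^ (n / 2) else 4 ^ (n / 2) + 4 ^ (n / 2 - 1), ?_, ?_, ?_⟩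
  · intro n; positivity
  · intro x hx
    -- derive the two scalar recurrences
    have hA : ∀ k : ℕ, x (2 * k + 2) = x (2 * k + 1) - x (2 * k) := by
      intro k
      have h := hx (2 * k + 1) (by omega)
      have e1 : (2 * k + 1) / 2 = k := by omega
      have e2 : (2 * k + 1) % 2 = 1 := by omega
      have e3 : 2 * k + 1 - 1 = 2 * k := by omega
      have e4 : (2 * k) / 2 = k := by omega
      simp only [e1, e2, e3, e4, if_pos rfl] at h
      push_cast at h
      have h2 : (4 : ℂ) ^ k * x (2 * k + 2) = (4 : ℂ) ^ k * (x (2 * k + 1) - x (2 * k)) := by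
        linear_combination h
      exact mul_left_cancel₀ (pow_ne_zero _ (by norm_num)) h2
    have hB : ∀ m : ℕ, 4 * x (2 * m + 3) = 5 * x (2 * m + 2) - x (2 * m + 1) := by
      intro m
      have h := hx (2 * m + 2) (by omega)
      have e1 : (2 * m + 2) / 2 = m + 1 := by omega
      have e2 : (2 * m + 2) % 2 = 0 := by omega
      have e3 : 2 * m + 2 - 1 = 2 * m + 1 := by omega
      have e4 : (2 * m + 1) / 2 = m := by omega
      have e5 : m + 1 - 1 = m := by omega
      simp only [e1, e2, e3, e4, e5, if_neg (by omega : ¬ (0 : ℕ) = 1)] at h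
      push_cast at h
      have h2 : (4 : ℂ) ^ m * (4 * x (2 * m + 3)) =
          (4 : ℂ) ^ m * (5 * x (2 * m + 2) - x (2 * m + 1)) := by
        linear_combination h
      exact mul_left_cancel₀ (pow_ne_zero _ (by norm_num)) h2
    set t1 : ℂ := Complex.I / 2 with ht1
    set t2 : ℂ := -(Complex.I / 2) with ht2
    have hsq1 : 4 * t1 ^ 2 = -1 := by
      rw [ht1, div_pow, Complex.I_sq]; norm_num
    have hsq2 : 4 * t2 ^ 2 = -1 := by
      rw [ht2, neg_pow, div_pow, Complex.I_sq]; norm_num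
    set c1 : ℂ := x 0 / 2 - Complex.I * (x 1 - x 0) with hc1
    set c2 : ℂ := x 0 / 2 + Complex.I * (x 1 - x 0) with hc2
    have key : ∀ k : ℕ, x (2 * k) = c1 * t1 ^ k + c2 * t2 ^ k ∧
        x (2 * k + 1) = c1 * (t1 + 1) * t1 ^ k + c2 * (t2 + 1) * t2 ^ k := by
      intro k
      induction k with
      | zero =>
        constructor
        · simp only [pow_zero, mul_one, hc1, hc2]; ring
        · simp only [pow_zero, mul_one, hc1, hc2, ht1, ht2]
          field_simp
          linear_combination (4 * x 1 - 4 * x 0) * Complex.I_sq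
      | succ k ih =>
        obtain ⟨ih0, ih1⟩ := ih
        have hnew : x (2 * (k + 1)) = c1 * t1 ^ (k + 1) + c2 * t2 ^ (k + 1) := by
          have := hA k
          rw [ih0, ih1] at this
          have e : 2 * (k + 1) = 2 * k + 2 := by ring
          rw [e, this]; ring
        refine ⟨hnew, ?_⟩
        have h4 : (4 : ℂ) ≠ 0 := by norm_num
        apply mul_left_cancel₀ h4
        have hBk := hB k
        rw [show 2 * k + 2 = 2 * (k + 1) from by ring, hnew, ih1] at hBk
        rw [show 2 * (k + 1) + 1 = 2 * k + 3 from by ring, hBk]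
        linear_combination (-c1 * t1 ^ k) * hsq1 + (-c2 * t2 ^ k) * hsq2
    -- norm bound
    have hnt1 : ‖t1‖ = 1 / 2 := by
      rw [ht1, norm_div, Complex.norm_I]
      norm_num
    have hnt2 : ‖t2‖ = 1 / 2 := by
      rw [ht2, norm_neg, norm_div, Complex.norm_I]
      norm_num
    set C : ℝ := 2 * (‖c1‖ + ‖c2‖) with hC
    have hbound : ∀ n : ℕ, ‖x n‖ ≤ C * (1 / 2) ^ (n / 2) := by
      intro n
      rcases Nat.even_or_odd n with ⟨k, hk⟩ | ⟨k, hk⟩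
      · subst hk
        have e : (k + k) / 2 = k := by omega
        rw [e]
        have e2 : k + k = 2 * k := by ring
        rw [e2, (key k).1]
        calc ‖c1 * t1 ^ k + c2 * t2 ^ k‖ ≤ ‖c1 * t1 ^ k‖ + ‖c2 * t2 ^ k‖ := norm_add_le _ _
          _ = ‖c1‖ * (1/2) ^ k + ‖c2‖ * (1/2) ^ k := by
              rw [norm_mul, norm_mul, norm_pow, norm_pow, hnt1, hnt2]
          _ ≤ C * (1/2) ^ k := by
              rw [hC]
              have h1 : (0:ℝ) ≤ (1/2:ℝ) ^ k := by positivity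
              nlinarith [norm_nonneg c1, norm_nonneg c2]
      · subst hk
        have e : (2 * k + 1) / 2 = k := by omega
        rw [e, (key k).2]
        have hn1 : ‖t1 + 1‖ ≤ 2 := by
          calc ‖t1 + 1‖ ≤ ‖t1‖ + ‖(1:ℂ)‖ := norm_add_le _ _
            _ ≤ 2 := by rw [hnt1]; simp; norm_num
        have hn2 : ‖t2 + 1‖ ≤ 2 := by
          calc ‖t2 + 1‖ ≤ ‖t2‖ + ‖(1:ℂ)‖ := norm_add_le _ _
            _ ≤ 2 := by rw [hnt2]; simp; norm_num
        calc ‖c1 * (t1 + 1) * t1 ^ k + c2 * (t2 + 1) * t2 ^ k‖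
            ≤ ‖c1 * (t1 + 1) * t1 ^ k‖ + ‖c2 * (t2 + 1) * t2 ^ k‖ := norm_add_le _ _
          _ = ‖c1‖ * ‖t1 + 1‖ * (1/2) ^ k + ‖c2‖ * ‖t2 + 1‖ * (1/2) ^ k := by
              rw [norm_mul, norm_mul, norm_mul, norm_mul, norm_pow, norm_pow, hnt1, hnt2]
          _ ≤ C * (1/2) ^ k := by
              rw [hC]
              have h1 : (0:ℝ) ≤ (1/2:ℝ) ^ k := by positivity
              have b1 : ‖c1‖ * ‖t1 + 1‖ ≤ 2 * ‖c1‖ := by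
                nlinarith [norm_nonneg c1]
              have b2 : ‖c2‖ * ‖t2 + 1‖ ≤ 2 * ‖c2‖ := by
                nlinarith [norm_nonneg c2]
              nlinarith [norm_nonneg c1, norm_nonneg c2]
    have hCnn : 0 ≤ C := by rw [hC]; positivity
    have hgeo : Summable (fun n : ℕ => (2 * C ^ 2) * (1 / 2 : ℝ) ^ n) :=
      (summable_geometric_of_lt_one (by norm_num) (by norm_num)).mul_left _
    refine Summable.of_nonneg_of_le (fun n => sq_nonneg _) (fun n => ?_) hgeo
    · have h1 : ‖x n‖ ^ 2 ≤ (C * (1/2) ^ (n / 2)) ^ 2 := by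
        have := hbound n
        nlinarith [norm_nonneg (x n)]
      have h2 : ((1/2 : ℝ) ^ (n / 2)) ^ 2 = (1/2 : ℝ) ^ (2 * (n / 2)) := by
        rw [← pow_mul]; ring_nf
      have h3 : (1/2 : ℝ) ^ (2 * (n / 2)) ≤ 2 * (1/2 : ℝ) ^ n := by
        have hle : n - 1 ≤ 2 * (n / 2) := by omega
        have h4 : (1/2 : ℝ) ^ (2 * (n / 2)) ≤ (1/2 : ℝ) ^ (n - 1) :=
          pow_le_pow_of_le_one (by norm_num) (by norm_num) hle
        have h5 : (1/2 : ℝ) ^ (n - 1) ≤ 2 * (1/2 : ℝ) ^ n := by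
          rcases Nat.eq_zero_or_pos n with h | h
          · subst h; norm_num
          · have hn' : n - 1 + 1 = n := by omega
            have e : (1/2 : ℝ) ^ n = (1/2 : ℝ) ^ (n - 1) * (1/2) := by
              rw [← pow_succ, hn']
            rw [e]
            nlinarith [(by positivity : (0:ℝ) < (1/2:ℝ) ^ (n - 1))]
        linarith
      calc ‖x n‖ ^ 2 ≤ (C * (1/2) ^ (n / 2)) ^ 2 := h1
        _ = C ^ 2 * ((1/2 : ℝ) ^ (n / 2)) ^ 2 := by ring
        _ = C ^ 2 * (1/2 : ℝ) ^ (2 * (n / 2)) := by rw [h2]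
        _ ≤ C ^ 2 * (2 * (1/2 : ℝ) ^ n) := by nlinarith [sq_nonneg C]
        _ = (2 * C ^ 2) * (1/2 : ℝ) ^ n := by ring
  · refine ⟨fun n => if Even n then Complex.I ^ n else 0, ?_, ?_⟩
    · intro n hn
      rcases Nat.even_or_odd n with ⟨k, hk⟩ | ⟨k, hk⟩
      · subst hk
        have h1 : ¬ Even (k + k + 1) := by rw [Nat.even_iff]; omega
        have h2 : ¬ Even (k + k - 1) := by rw [Nat.even_iff]; omega
        simp [h1, h2]
      · subst hk
        have e3 : 2 * k + 1 - 1 = 2 * k := by omega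
        have e4 : (2 * k + 1) / 2 = k := by omega
        have e5 : (2 * k) / 2 = k := by omega
        have h1 : Even (2 * k + 1 + 1) := ⟨k + 1, by ring⟩
        have h2 : Even (2 * k) := ⟨k, by ring⟩
        simp only [e3, e4, e5, if_pos h1, if_pos h2]
        push_cast
        have hI : Complex.I ^ (2 * k + 1 + 1) = -Complex.I ^ (2 * k) := by
          rw [show 2 * k + 1 + 1 = 2 * k + 2 from by ring, pow_add, Complex.I_sq]; ring
        rw [hI]
        ring
    · intro hs
      have h0 := hs.tendsto_atTop_zero
      have hmono : Tendsto (fun k : ℕ => 2 * k) atTop atTop :=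
        tendsto_atTop_atTop.mpr fun b => ⟨b, fun a ha => by omega⟩
      have h1 := h0.comp hmono
      have h2 : (fun k : ℕ => ‖(fun n => if Even n then Complex.I ^ n else 0) (2 * k)‖ ^ 2)
          = fun _ => (1 : ℝ) := by
        funext k
        have h2k : Even (2 * k) := ⟨k, by ring⟩
        simp [h2k, Complex.norm_I]
      rw [show ((fun n => ‖(fun n => if Even n then Complex.I ^ n else 0) n‖ ^ 2) ∘ fun k => 2 * k)
          = fun _ => (1:ℝ) from h2] at h1
      have := tendsto_nhds_unique h1 tendsto_const_nhds
      norm_num at this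
end

section
/- If a classical Jacobi matrix with positive off-diagonal λ_n and real diagonal β_n is positive semidefinite on finitely supported sequences, then its orthonormal polynomials p_n (defined by x p_n = λ_n p_{n+1} + β_n p_n + λ_{n−1} p_{n−1}, p_{−1}=0, p_0=1) satisfy (−1)^n p_n(0) > 0 for all n ≥ 0. -/
lemma quad_aux (A B : ℝ) (h : ∀ t : ℝ, 0 ≤ A * t ^ 2 + B * t) : B = 0 := by
  by_contra hB
  have hd : (0:ℝ) < 1 + A ^ 2 := by positivity
  have h1 := h (-B / (1 + A ^ 2))
  have h2 : 0 ≤ (A * (-B / (1 + A ^ 2)) ^ 2 + B * (-B / (1 + A ^ 2))) * (1 + A ^ 2) ^ 2 :=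
    mul_nonneg h1 (by positivity)
  have h3 : (A * (-B / (1 + A ^ 2)) ^ 2 + B * (-B / (1 + A ^ 2))) * (1 + A ^ 2) ^ 2
      = B ^ 2 * (A - 1 - A ^ 2) := by
    field_simp
    ring
  rw [h3] at h2
  have hBB : 0 < B ^ 2 := by positivity
  nlinarith [sq_nonneg (2 * A - 1)]



/-- If a classical Jacobi matrix with positive off-diagonal `λ_n` and real diagonal
`β_n` is positive semidefinite on finitely supported sequences, then its orthonormal
polynomials `p_n` (with `x p_n = λ_n p_{n+1} + β_n p_n + λ_{n−1} p_{n−1}`, `p_0 = 1`,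
`λ_{−1} = 0`) satisfy `(−1)^n p_n(0) > 0` for all `n`. -/
theorem stmt_19 (lam beta : ℕ → ℝ) (hlam : ∀ n, 0 < lam n)
    (hpos : ∀ u : ℕ → ℂ, {n : ℕ | u n ≠ 0}.Finite →
      0 ≤ (∑' n : ℕ,
        ((lam n : ℂ) * u (n + 1) + (beta n : ℂ) * u n +
          (if n = 0 then 0 else (lam (n - 1) : ℂ) * u (n - 1))) *
            (starRingEnd ℂ) (u n)).re)
    (p : ℕ → Polynomial ℝ) (hp0 : p 0 = 1)
    (hprec : ∀ n : ℕ, Polynomial.X * p n =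
      Polynomial.C (lam n) * p (n + 1) + Polynomial.C (beta n) * p n +
        (if n = 0 then 0 else Polynomial.C (lam (n - 1)) * p (n - 1))) :
    ∀ n : ℕ, 0 < (-1 : ℝ) ^ n * (p n).eval 0 := by
  -- recurrence at 0
  have hrec0 : ∀ k : ℕ, lam k * (p (k+1)).eval 0 + beta k * (p k).eval 0 +
      (if k = 0 then 0 else lam (k-1) * (p (k-1)).eval 0) = 0 := by
    intro k
    have h := congrArg (Polynomial.eval 0) (hprec k)
    simp only [Polynomial.eval_mul, Polynomial.eval_X, Polynomial.eval_add, Polynomial.eval_C,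
      zero_mul, apply_ite (Polynomial.eval 0), Polynomial.eval_zero] at h
    split_ifs at h ⊢ <;>
      simp only [Polynomial.eval_zero, Polynomial.eval_mul, Polynomial.eval_C] at h <;> linarith
  -- key quadratic inequality
  have key : ∀ n : ℕ, ∀ t : ℝ,
      0 ≤ beta (n+1) * t ^ 2 + 2 * lam n * (p n).eval 0 * t
          - lam n * (p (n+1)).eval 0 * (p n).eval 0 := by
    intro n t
    set v : ℕ → ℝ := fun k => if k ≤ n then (p k).eval 0 else if k = n+1 then t else 0 with hv
    have hvz : ∀ k, n + 2 ≤ k → v k = 0 := by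
      intro k hk
      have h1 : ¬ k ≤ n := by omega
      have h2 : k ≠ n + 1 := by omega
      simp [hv, h1, h2]
    have hfin : {k : ℕ | (fun k => ((v k : ℂ))) k ≠ 0}.Finite := by
      apply Set.Finite.subset (Set.finite_Iio (n+2))
      intro k hk
      simp only [Set.mem_setOf_eq, ne_eq, Complex.ofReal_eq_zero] at hk
      by_contra hc
      exact hk (hvz k (by simpa [Set.mem_Iio, not_lt] using hc))
    have hpos' := hpos (fun k => ((v k : ℂ))) hfin
    set g : ℕ → ℝ := fun k =>
      (lam k * v (k+1) + beta k * v k + (if k = 0 then 0 else lam (k-1) * v (k-1))) * v k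
      with hg
    have htsum : (∑' k : ℕ,
        ((lam k : ℂ) * ((fun k => ((v k : ℂ))) (k + 1)) + (beta k : ℂ) * ((fun k => ((v k : ℂ))) k) +
          (if k = 0 then 0 else (lam (k - 1) : ℂ) * ((fun k => ((v k : ℂ))) (k - 1)))) *
            (starRingEnd ℂ) ((fun k => ((v k : ℂ))) k))
        = ((∑ k ∈ Finset.range (n+2), g k : ℝ) : ℂ) := by
      rw [tsum_eq_sum (s := Finset.range (n+2)) ?_]
      · push_cast
        refine Finset.sum_congr rfl fun k _ => ?_
        simp only [Complex.conj_ofReal, hg]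
        split_ifs <;> push_cast <;> ring
      · intro k hk
        simp only [Finset.mem_range, not_lt] at hk
        have : v k = 0 := hvz k hk
        simp [this]
    rw [htsum, Complex.ofReal_re] at hpos'
    rw [Finset.sum_range_succ, Finset.sum_range_succ] at hpos'
    have hzero : ∑ k ∈ Finset.range n, g k = 0 := by
      apply Finset.sum_eq_zero
      intro k hk
      simp only [Finset.mem_range] at hk
      have e1 : v k = (p k).eval 0 := if_pos hk.le
      have e2 : v (k+1) = (p (k+1)).eval 0 := if_pos hk
      have e3 : v (k-1) = (p (k-1)).eval 0 := if_pos (by omega)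
      rw [hg]
      simp only
      rw [e1, e2, e3, hrec0 k, zero_mul]
    rw [hzero, zero_add] at hpos'
    -- compute g n and g (n+1)
    have en : v n = (p n).eval 0 := if_pos le_rfl
    have en1 : v (n+1) = t := by simp [hv]
    have en2 : v (n+2) = 0 := hvz (n+2) le_rfl
    have enm : v (n-1) = (p (n-1)).eval 0 := if_pos (by omega)
    have hgn : g n = lam n * t * (p n).eval 0 - lam n * (p (n+1)).eval 0 * (p n).eval 0 := by
      rw [hg]
      simp only
      rw [en, en1, enm]
      have h := hrec0 n
      split_ifs at h ⊢ with h0 <;> linear_combination (p n).eval 0 * h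
    have hgn1 : g (n+1) = (beta (n+1) * t + lam n * (p n).eval 0) * t := by
      rw [hg]
      simp only
      have : n + 1 - 1 = n := rfl
      rw [if_neg (Nat.succ_ne_zero n), this, en, en1]
      rw [show n + 1 + 1 = n + 2 from rfl, en2]
      ring
    rw [hgn, hgn1] at hpos'
    nlinarith [hpos']
  -- main induction
  intro m
  induction m with
  | zero => simp [hp0]
  | succ n ih =>
    have hQ := key n
    have h0 := hQ 0
    have hln := hlam n
    have hP : (p n).eval 0 ≠ 0 := by
      intro h
      rw [h, mul_zero] at ih
      exact lt_irrefl 0 ih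
    have hsq : ((-1 : ℝ) ^ n) ^ 2 = 1 := by
      rw [← pow_mul, mul_comm, pow_mul]
      norm_num
    have hqP : (p (n+1)).eval 0 * (p n).eval 0 ≤ 0 := by nlinarith [h0]
    have hpow : (-1 : ℝ) ^ (n+1) = -((-1 : ℝ) ^ n) := by rw [pow_succ]; ring
    have hnonneg : 0 ≤ (-1 : ℝ) ^ (n+1) * (p (n+1)).eval 0 := by
      rw [hpow]
      nlinarith [ih, hqP, hsq]
    rcases lt_or_eq_of_le hnonneg with h | h
    · exact h
    have hq0 : (p (n+1)).eval 0 = 0 := by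
      rcases mul_eq_zero.mp h.symm with h' | h'
      · exact absurd h' (by positivity)
      · exact h'
    have hB := quad_aux (beta (n+1)) (2 * lam n * (p n).eval 0) (by
      intro t
      have := hQ t
      rw [hq0] at this
      linarith)
    have : lam n * (p n).eval 0 ≠ 0 := mul_ne_zero (ne_of_gt hln) hP
    exact absurd (by linarith : lam n * (p n).eval 0 = 0) this
end
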